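/- For any finite simple graph G, Σ_v |T_{N[v]}| ≤ Σ_v (d(v)^3 − d(v))/6, where both sums are over all vertices v of G. -/

import Mathlib

/-!
Split the triangles counted at `v` according to whether they contain `v`. Those through `v`
correspond to edges inside `N(v)`, so there are at most `C(d(v), 2)` of them. A triangle `t ∌ v`
meeting `N(v)` is exchanged, for each neighbour `c` of `v` in `t`, into the triple
`t - c + v ⊆ N(c)`. The pair `(v, t)` has `|N(v) ∩ t|` such partners, and a triple `S ⊆ N(c)` has
as many partners as it spans edges, which is again `|N(v) ∩ t|`. Weighted double counting thus
bounds the number of these pairs by `∑ C(d(c), 3)`, and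
`C(d, 2) + C(d, 3) = C(d + 1, 3) = (d³ - d) / 6`.
-/

open Finset

namespace Finset

variable {α β : Type*} {s : Finset α} {t : Finset β} {r : α → β → Prop} [∀ a b, Decidable (r a b)]

/-- Weighted double counting: each `a ∈ s` spreads weight `1` evenly over its partners, and `h`
ensures that no `b ∈ t` receives more than `1` in total. -/
theorem card_le_card_of_forall_card_bipartiteBelow_le (hs : ∀ a ∈ s, ∃ b ∈ t, r a b)
    (h : ∀ a ∈ s, ∀ b ∈ t, r a b → #(s.bipartiteBelow r b) ≤ #(t.bipartiteAbove r a)) :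
    #s ≤ #t := by
  have above_pos : ∀ a ∈ s, (0 : ℚ) < #(t.bipartiteAbove r a) := fun a ha => by
    obtain ⟨b, hb, hab⟩ := hs a ha
    exact_mod_cast card_pos.2 ⟨b, (mem_bipartiteAbove r).2 ⟨hb, hab⟩⟩
  suffices (#s : ℚ) ≤ #t by exact_mod_cast this
  calc (#s : ℚ) = ∑ a ∈ s, ∑ _b ∈ t.bipartiteAbove r a, (1 / #(t.bipartiteAbove r a) : ℚ) := by
        rw [card_eq_sum_ones, Nat.cast_sum]
        refine sum_congr rfl fun a ha => ?_
        rw [sum_const, nsmul_eq_mul, mul_one_div_cancel (above_pos a ha).ne', Nat.cast_one]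
    _ ≤ ∑ a ∈ s, ∑ b ∈ t.bipartiteAbove r a, (1 / #(s.bipartiteBelow r b) : ℚ) := by
        refine sum_le_sum fun a ha => sum_le_sum fun b hb => ?_
        rw [mem_bipartiteAbove r] at hb
        have : 0 < #(s.bipartiteBelow r b) := card_pos.2 ⟨a, (mem_bipartiteBelow r).2 ⟨ha, hb.2⟩⟩
        gcongr
        exact h a ha b hb.1 hb.2
    _ = ∑ b ∈ t, ∑ _a ∈ s.bipartiteBelow r b, (1 / #(s.bipartiteBelow r b) : ℚ) :=
        sum_sum_bipartiteAbove_eq_sum_sum_bipartiteBelow r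
          fun _ b => 1 / (#(s.bipartiteBelow r b) : ℚ)
    _ ≤ ∑ _b ∈ t, (1 : ℚ) := by
        refine sum_le_sum fun b _ => ?_
        rw [sum_const, nsmul_eq_mul]
        rcases (#(s.bipartiteBelow r b)).eq_zero_or_pos with h0 | hpos
        · simp [h0]
        · rw [mul_one_div_cancel (by exact_mod_cast hpos.ne')]
    _ = #t := by simp

end Finset

namespace SimpleGraph

variable {V : Type*} (G : SimpleGraph V) [DecidableRel G.Adj]

/-- With `t = {c, a, b}` and `S = {v, a, b}`, both sides count `ab` together with the edges from `v`
to `{a, b}`: `x ∈ S` qualifies iff the other two vertices of `S` are adjacent. -/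
theorem card_filter_isClique_erase_insert_le [DecidableEq V] {v c : V} {t S : Finset V}
    (ht : G.IsNClique 3 t) (hvt : v ∉ t) (hvc : G.Adj v c) (hcS : c ∉ S)
    (hU : insert v t = insert c S) :
    #{x ∈ S | G.IsClique ((insert c S).erase x : Set V)} ≤ #{y ∈ t | G.Adj v y} := by
  have hct : c ∈ t := mem_of_mem_insert_of_ne (hU ▸ mem_insert_self c S) hvc.ne'
  obtain ⟨a, b, hab_ne, htc⟩ : ∃ a b, a ≠ b ∧ t.erase c = {a, b} := by
    rw [← card_eq_two, card_erase_of_mem hct, ht.2]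
  have hS : S = {v, a, b} := by
    rw [← erase_insert hcS, ← hU, erase_insert_of_ne hvc.ne, htc]
  have ht' : t = {c, a, b} := by rw [← htc, insert_erase hct]
  have hta : a ∈ t := mem_of_mem_erase (htc ▸ mem_insert_self a {b})
  have htb : b ∈ t := mem_of_mem_erase (htc ▸ mem_insert_of_mem (mem_singleton_self b))
  have hca : G.Adj c a := ht.1 hct hta (ne_of_mem_erase (htc ▸ mem_insert_self a {b})).symm
  have hcb : G.Adj c b :=
    ht.1 hct htb (ne_of_mem_erase (htc ▸ mem_insert_of_mem (mem_singleton_self b))).symm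
  have hab : G.Adj a b := ht.1 hta htb hab_ne
  have hva_ne : v ≠ a := fun h => hvt (h ▸ hta)
  have hvb_ne : v ≠ b := fun h => hvt (h ▸ htb)
  rw [hS, ht']
  by_cases hva : G.Adj v a <;> by_cases hvb : G.Adj v b <;>
    simp [filter_insert, filter_singleton, erase_insert_eq_erase, erase_insert_of_ne,
      isClique_insert, hvc, hvc.symm, hca, hcb, hab, hva_ne, hvb_ne, hva, hvb, hca.ne, hcb.ne,
      hab_ne, hvc.ne']

variable [Fintype V]

def neighborTriples : Finset (Σ _ : V, Finset V) :=
  univ.sigma fun c => (G.neighborFinset c).powersetCard 3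

theorem card_neighborTriples : #G.neighborTriples = ∑ c, (G.degree c).choose 3 := by
  simp only [neighborTriples, card_sigma, card_powersetCard, card_neighborFinset_eq_degree]

variable [DecidableEq V]

theorem card_filter_mem_cliqueFinset_three_le (v : V) :
    #{t ∈ G.cliqueFinset 3 | v ∈ t} ≤ (G.degree v).choose 2 := by
  rw [← card_neighborFinset_eq_degree, ← card_powersetCard]
  refine card_le_card_of_injOn (fun t => t.erase v) (fun t ht => ?_)
    ((erase_injOn' v).mono fun t ht => (mem_filter.1 ht).2)
  obtain ⟨ht, hvt⟩ := mem_filter.1 ht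
  rw [mem_cliqueFinset_iff] at ht
  refine mem_powersetCard.2 ⟨fun u hu => ?_, by rw [card_erase_of_mem hvt, ht.2]⟩
  obtain ⟨huv, hut⟩ := mem_erase.1 hu
  exact (mem_neighborFinset _ _ _).2 (ht.1 hvt hut huv.symm)

theorem card_filter_exists_mem_closedNbhd (v : V) :
    #{t ∈ G.cliqueFinset 3 | ∃ u ∈ t, u = v ∨ G.Adj u v} =
      #{t ∈ G.cliqueFinset 3 | v ∈ t} +
        #{t ∈ G.cliqueFinset 3 | v ∉ t ∧ ∃ u ∈ t, G.Adj v u} := by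
  rw [← card_filter_add_card_filter_not (v ∈ ·), filter_filter, filter_filter]
  congr 2 <;> refine filter_congr fun t _ => ?_
  · exact ⟨And.right, fun hvt => ⟨⟨v, hvt, Or.inl rfl⟩, hvt⟩⟩
  · constructor
    · rintro ⟨⟨u, hut, rfl | hu⟩, hvt⟩
      exacts [(hvt hut).elim, ⟨hvt, u, hut, hu.symm⟩]
    · rintro ⟨hvt, u, hut, hu⟩
      exact ⟨⟨u, hut, Or.inr hu.symm⟩, hvt⟩

def outerTriangles : Finset (Σ _ : V, Finset V) :=
  univ.sigma fun v => {t ∈ G.cliqueFinset 3 | v ∉ t ∧ ∃ u ∈ t, G.Adj v u}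

theorem card_outerTriangles :
    #G.outerTriangles = ∑ v, #{t ∈ G.cliqueFinset 3 | v ∉ t ∧ ∃ u ∈ t, G.Adj v u} :=
  card_sigma _ _

/-- `(v, t)` and `(c, S)` are related when `S = t - c + v` for a neighbour `c` of `v`. -/
def IsExchange (p q : Σ _ : V, Finset V) : Prop :=
  G.Adj p.1 q.1 ∧ insert p.1 p.2 = insert q.1 q.2

instance : DecidableRel G.IsExchange := fun _ _ => inferInstanceAs (Decidable (_ ∧ _))

theorem exchange_mem_bipartiteAbove {v c : V} {t : Finset V} (ht : ⟨v, t⟩ ∈ G.outerTriangles)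
    (hc : c ∈ t) (hvc : G.Adj v c) :
    ⟨c, (insert v t).erase c⟩ ∈ G.neighborTriples.bipartiteAbove G.IsExchange ⟨v, t⟩ := by
  simp only [outerTriangles, mem_sigma, mem_filter, mem_cliqueFinset_iff] at ht
  obtain ⟨-, ht, hvt, -⟩ := ht
  refine (mem_bipartiteAbove _).2 ⟨mem_sigma.2 ⟨mem_univ c, mem_powersetCard.2 ⟨?_, ?_⟩⟩,
    hvc, (insert_erase (mem_insert_of_mem hc)).symm⟩
  · intro x hx
    obtain ⟨hxc, hx⟩ := mem_erase.1 hx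
    rw [mem_neighborFinset]
    rcases mem_insert.1 hx with rfl | hx
    · exact hvc.symm
    · exact ht.1 hc hx hxc.symm
  · rw [card_erase_of_mem (mem_insert_of_mem hc), card_insert_of_notMem hvt, ht.2]

theorem mem_image_of_mem_bipartiteBelow {c : V} {S : Finset V} {p : Σ _ : V, Finset V}
    (hp : p ∈ G.outerTriangles.bipartiteBelow G.IsExchange ⟨c, S⟩) :
    p ∈ {x ∈ S | G.IsClique ((insert c S).erase x : Set V)}.image
      fun x => ⟨x, (insert c S).erase x⟩ := by
  obtain ⟨x, t⟩ := p
  simp only [mem_bipartiteBelow, outerTriangles, mem_sigma, mem_filter, mem_cliqueFinset_iff,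
    IsExchange] at hp
  obtain ⟨⟨-, ht, hxt, -⟩, hxc, hU⟩ := hp
  have hS : (insert c S).erase x = t := by rw [← hU, erase_insert hxt]
  refine mem_image.2 ⟨x, mem_filter.2 ⟨?_, hS ▸ ht.1⟩, by rw [hS]⟩
  exact mem_of_mem_insert_of_ne (hU ▸ mem_insert_self x t) hxc.ne

theorem card_bipartiteBelow_le_card_bipartiteAbove {p q : Σ _ : V, Finset V}
    (hp : p ∈ G.outerTriangles) (hq : q ∈ G.neighborTriples) (hpq : G.IsExchange p q) :
    #(G.outerTriangles.bipartiteBelow G.IsExchange q) ≤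
      #(G.neighborTriples.bipartiteAbove G.IsExchange p) := by
  obtain ⟨v, t⟩ := p
  obtain ⟨c, S⟩ := q
  have hvt : v ∉ t ∧ G.IsNClique 3 t := by
    simp only [outerTriangles, mem_sigma, mem_filter, mem_cliqueFinset_iff] at hp
    exact ⟨hp.2.2.1, hp.2.1⟩
  have hcS : c ∉ S := fun h => by
    simp only [neighborTriples, mem_sigma, mem_powersetCard] at hq
    exact G.notMem_neighborFinset_self c (hq.2.1 h)
  calc #(G.outerTriangles.bipartiteBelow G.IsExchange ⟨c, S⟩)
      ≤ #({x ∈ S | G.IsClique ((insert c S).erase x : Set V)}.image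
          fun x => (⟨x, (insert c S).erase x⟩ : Σ _ : V, Finset V)) :=
        card_le_card fun _ => G.mem_image_of_mem_bipartiteBelow
    _ ≤ #{x ∈ S | G.IsClique ((insert c S).erase x : Set V)} := card_image_le
    _ ≤ #{y ∈ t | G.Adj v y} :=
        G.card_filter_isClique_erase_insert_le hvt.2 hvt.1 hpq.1 hcS hpq.2
    _ = #({y ∈ t | G.Adj v y}.image
          fun y => (⟨y, (insert v t).erase y⟩ : Σ _ : V, Finset V)) :=
        (card_image_of_injective _ fun _ _ h => congrArg Sigma.fst h).symm
    _ ≤ #(G.neighborTriples.bipartiteAbove G.IsExchange ⟨v, t⟩) := by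
        refine card_le_card (image_subset_iff.2 fun y hy => ?_)
        rw [mem_filter] at hy
        exact G.exchange_mem_bipartiteAbove hp hy.1 hy.2

theorem card_outerTriangles_le_card_neighborTriples : #G.outerTriangles ≤ #G.neighborTriples := by
  refine card_le_card_of_forall_card_bipartiteBelow_le (fun p hp => ?_)
    fun p hp q hq hpq => G.card_bipartiteBelow_le_card_bipartiteAbove hp hq hpq
  obtain ⟨v, t⟩ := p
  obtain ⟨c, hc, hvc⟩ := (mem_filter.1 (mem_sigma.1 hp).2).2.2
  exact ⟨_, (mem_bipartiteAbove _).1 (G.exchange_mem_bipartiteAbove hp hc hvc)⟩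

theorem sum_card_filter_exists_mem_closedNbhd_le :
    ∑ v, #{t ∈ G.cliqueFinset 3 | ∃ u ∈ t, u = v ∨ G.Adj u v} ≤
      ∑ v, (G.degree v + 1).choose 3 := by
  calc ∑ v, #{t ∈ G.cliqueFinset 3 | ∃ u ∈ t, u = v ∨ G.Adj u v}
      = ∑ v, #{t ∈ G.cliqueFinset 3 | v ∈ t} + #G.outerTriangles := by
        simp only [card_filter_exists_mem_closedNbhd, sum_add_distrib, card_outerTriangles]
    _ ≤ ∑ v, (G.degree v).choose 2 + ∑ v, (G.degree v).choose 3 :=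
        add_le_add (sum_le_sum fun v _ => G.card_filter_mem_cliqueFinset_three_le v)
          (G.card_outerTriangles_le_card_neighborTriples.trans_eq G.card_neighborTriples)
    _ = ∑ v, (G.degree v + 1).choose 3 := by
        simp only [Nat.choose_succ_succ', sum_add_distrib]

end SimpleGraph

theorem Nat.cast_add_one_choose_three {K : Type*} [Field K] [CharZero K] (d : ℕ) :
    ((d + 1).choose 3 : K) = (d ^ 3 - d) / 6 := by
  induction d with
  | zero => simp [Nat.choose_eq_zero_of_lt]
  | succ n ih =>
    rw [Nat.choose_succ_succ', Nat.cast_add, ih, Nat.cast_choose_two]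
    push_cast
    ring

/-- `Σ_v |T_{N[v]}| ≤ Σ_v (d(v)^3 - d(v))/6`, where `|T_{N[v]}|` is the number of triangles
with at least one vertex in the closed neighborhood of `v`. -/
theorem sum_triangles_closed_neighborhoods_le
    (V : Type*) [Fintype V] [DecidableEq V]
    (G : SimpleGraph V) [DecidableRel G.Adj] :
    (∑ v : V,
        (((G.cliqueFinset 3).filter (fun t => ∃ u ∈ t, u = v ∨ G.Adj u v)).card : ℚ))
      ≤ ∑ v : V, ((G.degree v : ℚ) ^ 3 - (G.degree v : ℚ)) / 6 := by
  simp_rw [← Nat.cast_add_one_choose_three]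
  exact_mod_cast G.sum_card_filter_exists_mem_closedNbhd_le
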